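/- arXiv:2412.04998 — 4 statements merged into one kernel-verified Lean document; each statement's English description precedes it below -/
import Mathlib

section
/- For every non-negative integer n, Δ₁(2n+1) ≡ 0 (mod 3). -/
/-!
Modulo 3, Frobenius turns `(1 - qⁿ)³` into `1 - q³ⁿ`, so the generating function of `Δ₁`
becomes `∏ (1 - q²ⁿ) / (1 - q⁶ⁿ)`, a series in `q²`. Evenness is detected by `f(-q) = f(q)`:
both products in the quotient are fixed by `q ↦ -q`, hence so is the generating function, which
forces `2 Δ₁(2n+1) ≡ 0 (mod 3)`, and `2` is invertible modulo `3`.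
-/

open PowerSeries Finset

section DvdSubOne

variable {R : Type*} [CommRing R]

theorem dvd_mul_sub_one {a f g : R} (hf : a ∣ f - 1) (hg : a ∣ g - 1) : a ∣ f * g - 1 := by
  rw [show f * g - 1 = f * (g - 1) + (f - 1) by ring]
  exact (hg.mul_left f).add hf

theorem dvd_prod_sub_one {ι : Type*} {a : R} {s : Finset ι} {f : ι → R}
    (h : ∀ i ∈ s, a ∣ f i - 1) : a ∣ ∏ i ∈ s, f i - 1 :=
  prod_induction f (fun x => a ∣ x - 1) (fun _ _ => dvd_mul_sub_one) (by simp) h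

end DvdSubOne

namespace PowerSeries

variable {R : Type*} [CommRing R]

instance instCharP (p : ℕ) [CharP R p] : CharP R⟦X⟧ p :=
  charP_of_injective_ringHom C_injective p

theorem one_sub_X_pow_pow_char (p : ℕ) [Fact p.Prime] [CharP R p] (k : ℕ) :
    (1 - X ^ k : R⟦X⟧) ^ p = 1 - X ^ (p * k) := by
  rw [sub_pow_char, one_pow, ← pow_mul, mul_comm]

theorem X_pow_dvd_one_sub_X_pow_sub_one {k j : ℕ} (h : k ≤ j) :
    (X : R⟦X⟧) ^ k ∣ (1 - X ^ j) - 1 := by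
  rw [sub_sub_cancel_left]
  exact (pow_dvd_pow X h).neg_right

theorem X_pow_dvd_one_sub_X_pow_mul_one_sub_X_pow_sub_one {a b : ℕ} (ha : 0 < a) (hb : 0 < b)
    (m : ℕ) : (X : R⟦X⟧) ^ (m + 1) ∣ (1 - X ^ (a * (m + 1))) * (1 - X ^ (b * (m + 1))) - 1 :=
  dvd_mul_sub_one (X_pow_dvd_one_sub_X_pow_sub_one (Nat.le_mul_of_pos_left _ ha))
    (X_pow_dvd_one_sub_X_pow_sub_one (Nat.le_mul_of_pos_left _ hb))

theorem isUnit_prod_one_sub_X_pow {ι : Type*} {s : Finset ι} {k : ι → ℕ}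
    (hk : ∀ i ∈ s, k i ≠ 0) : IsUnit (∏ i ∈ s, (1 - X ^ k i : R⟦X⟧)) := by
  rw [isUnit_iff_constantCoeff, map_prod]
  refine prod_induction _ IsUnit (fun _ _ => IsUnit.mul) isUnit_one fun i hi => ?_
  simp [zero_pow (hk i hi)]

theorem rescale_neg_one_prod_one_sub_X_pow {ι : Type*} {s : Finset ι} {k : ι → ℕ}
    (hk : ∀ i ∈ s, Even (k i)) :
    rescale (-1) (∏ i ∈ s, (1 - X ^ k i : R⟦X⟧)) = ∏ i ∈ s, (1 - X ^ k i) := by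
  rw [map_prod]
  refine prod_congr rfl fun i hi => ?_
  rw [map_sub, map_one, map_pow, rescale_neg_one_X, (hk i hi).neg_pow]

theorem coeff_mul_prod_range_of_lt {A : R⟦X⟧} {g : ℕ → R⟦X⟧}
    (hg : ∀ m, (X : R⟦X⟧) ^ (m + 1) ∣ g m - 1) {d N : ℕ} (hd : d < N) :
    coeff d (A * ∏ m ∈ range N, g m) = coeff d (A * ∏ m ∈ range (d + 1), g m) := by
  have htail : (X : R⟦X⟧) ^ (d + 1) ∣ ∏ m ∈ Ico (d + 1) N, g m - 1 :=
    dvd_prod_sub_one fun m hm => (pow_dvd_pow X (by simp at hm; omega)).trans (hg m)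
  have hdiff : (X : R⟦X⟧) ^ (d + 1) ∣
      A * ∏ m ∈ range N, g m - A * ∏ m ∈ range (d + 1), g m := by
    rw [← prod_range_mul_prod_Ico g hd, ← mul_assoc, ← mul_sub_one]
    exact htail.mul_left _
  rw [← sub_eq_zero, ← map_sub]
  exact X_pow_dvd_iff.mp hdiff d (lt_add_one d)

theorem X_pow_dvd_mul_prod_range_sub_prod_range {A : R⟦X⟧} {g h : ℕ → R⟦X⟧}
    (hg : ∀ m, (X : R⟦X⟧) ^ (m + 1) ∣ g m - 1) (hh : ∀ m, (X : R⟦X⟧) ^ (m + 1) ∣ h m - 1)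
    (hA : ∀ d, coeff d (A * ∏ m ∈ range (d + 1), g m) = coeff d (∏ m ∈ range (d + 1), h m))
    (N : ℕ) : (X : R⟦X⟧) ^ N ∣ A * ∏ m ∈ range N, g m - ∏ m ∈ range N, h m := by
  refine X_pow_dvd_iff.mpr fun d hd => ?_
  have hh' := coeff_mul_prod_range_of_lt (A := 1) hh hd
  rw [one_mul, one_mul] at hh'
  rw [map_sub, coeff_mul_prod_range_of_lt hg hd, hA, hh', sub_self]

theorem X_pow_dvd_rescale_neg_one_sub_of_dvd_mul_sub {F P Q : R⟦X⟧} {N : ℕ} (hP : IsUnit P)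
    (hPe : rescale (-1) P = P) (hQe : rescale (-1) Q = Q) (h : X ^ N ∣ F * P - Q) :
    X ^ N ∣ rescale (-1) F - F := by
  have hX : (X : R⟦X⟧) ^ N ∣ rescale (-1) (X ^ N) := by
    rw [map_pow, rescale_neg_one_X, neg_pow]
    exact dvd_mul_left _ _
  have hσ : X ^ N ∣ rescale (-1) F * P - Q := by
    simpa only [map_sub, map_mul, hPe, hQe] using hX.trans (map_dvd (rescale (-1)) h)
  rw [← hP.dvd_mul_right, sub_mul]
  simpa only [sub_sub_sub_cancel_right] using dvd_sub hσ h

theorem two_mul_coeff_odd_eq_zero {F : R⟦X⟧}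
    (hF : ∀ d, coeff d (F *
        ∏ m ∈ range (d + 1), ((1 - X ^ (3 * (m + 1))) * (1 - X ^ (6 * (m + 1))))) =
      coeff d (∏ m ∈ range (d + 1), ((1 - X ^ (2 * (m + 1))) * (1 - X ^ (3 * (m + 1))))))
    {d : ℕ} (hd : Odd d) : 2 * coeff d F = 0 := by
  have hdvd := X_pow_dvd_mul_prod_range_sub_prod_range
    (X_pow_dvd_one_sub_X_pow_mul_one_sub_X_pow_sub_one (by norm_num) (by norm_num))
    (X_pow_dvd_one_sub_X_pow_mul_one_sub_X_pow_sub_one (by norm_num) (by norm_num)) hF (d + 1)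
  rw [prod_mul_distrib, prod_mul_distrib] at hdvd
  set P₂ : R⟦X⟧ := ∏ m ∈ range (d + 1), (1 - X ^ (2 * (m + 1)))
  set P₃ : R⟦X⟧ := ∏ m ∈ range (d + 1), (1 - X ^ (3 * (m + 1)))
  set P₆ : R⟦X⟧ := ∏ m ∈ range (d + 1), (1 - X ^ (6 * (m + 1)))
  rw [show F * (P₃ * P₆) - P₂ * P₃ = (F * P₆ - P₂) * P₃ by ring,
    (isUnit_prod_one_sub_X_pow (by simp)).dvd_mul_right] at hdvd
  have heven := X_pow_dvd_rescale_neg_one_sub_of_dvd_mul_sub (isUnit_prod_one_sub_X_pow (by simp))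
    (rescale_neg_one_prod_one_sub_X_pow fun m _ => ⟨3 * (m + 1), by ring⟩)
    (rescale_neg_one_prod_one_sub_X_pow fun m _ => ⟨m + 1, by ring⟩) hdvd
  have hcoeff := X_pow_dvd_iff.mp heven d (lt_add_one d)
  rw [map_sub, coeff_rescale, hd.neg_one_pow] at hcoeff
  linear_combination -hcoeff

end PowerSeries

/-- Andrews–Paule: `Δ₁(2n+1) ≡ 0 (mod 3)`, where `Δ₁` counts broken 1-diamond
partitions, i.e. `∑ Δ₁(n) qⁿ = ∏_{n≥1} (1-q^{2n})(1-q^{3n})/((1-qⁿ)³(1-q^{6n}))`.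
The generating-function identity is encoded coefficientwise: the coefficient of `q^d`
only depends on the factors with index `n ≤ d`, so the infinite products are replaced
by the finite products of their factors for `n = 1, …, d+1` (cross-multiplied to avoid
inverses). -/
theorem broken1diamond_mod_three (Δ₁ : ℕ → ℕ)
    (hΔ : ∀ d : ℕ,
      (PowerSeries.coeff d) ((PowerSeries.mk fun n => (Δ₁ n : ℤ)) *
        ∏ n ∈ range (d + 1), ((1 - (X : ℤ⟦X⟧) ^ (n + 1)) ^ 3 * (1 - X ^ (6 * (n + 1))))) =
      (PowerSeries.coeff d)
        (∏ n ∈ range (d + 1), ((1 - (X : ℤ⟦X⟧) ^ (2 * (n + 1))) * (1 - X ^ (3 * (n + 1)))))) :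
    ∀ n : ℕ, 3 ∣ Δ₁ (2 * n + 1) := by
  intro n
  have hmod3 := fun d => congrArg (Int.castRingHom (ZMod 3)) (hΔ d)
  simp only [← coeff_map, map_mul, map_prod, map_sub, map_pow, map_one, map_X,
    one_sub_X_pow_pow_char] at hmod3
  have h2Δ := two_mul_coeff_odd_eq_zero hmod3 (odd_two_mul_add_one n)
  rw [coeff_map, coeff_mk, eq_intCast, Int.cast_natCast] at h2Δ
  rw [← ZMod.natCast_eq_zero_iff]
  generalize ((Δ₁ (2 * n + 1) : ℕ) : ZMod 3) = c at h2Δ ⊢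
  revert c
  decide
end

section
/- Let v₁, v₂, u : ℍ → ℂ and l ∈ ℤ. Suppose for k = l and k = l+1 there exist polynomials p_k^{(1)}, p_k^{(2)} ∈ ℤ[t] with U₂(u t^k) = v₁ p_k^{(1)}(t) + v₂ p_k^{(2)}(t) and ord_t(p_k^{(i)}) ≥ ⌈(k+s_i)/2⌉ for fixed integers s₁, s₂. Then for every integer k ≥ l there exist such polynomials p_k^{(1)}, p_k^{(2)} ∈ ℤ[t] satisfying both conditions. -/
/-! The recursion writes `U₂(u t^{k+2})` as `q · U₂(u tᵏ) + r · U₂(u t^{k+1})` with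
`q = -(2t² + t)` and `r = 4t² + 2t`, both divisible by `t`. So the representing polynomials
for `k + 2` are `q p_k⁽ⁱ⁾ + r p_{k+1}⁽ⁱ⁾`, whose order is at least
`1 + min(⌈(k+sᵢ)/2⌉, ⌈(k+1+sᵢ)/2⌉) = ⌈(k+2+sᵢ)/2⌉`; a two-step induction finishes. -/

open Complex Polynomial

/-- The Atkin operator `U₂(f)(τ) = (1/2) ∑_{λ=0}^{1} f((τ+λ)/2)`. -/
noncomputable def U2 (f : ℂ → ℂ) (τ : ℂ) : ℂ :=
  (1 / 2 : ℂ) * (f (τ / 2) + f ((τ + 1) / 2))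

theorem Int.le_induction_two_step {P : ℤ → Prop} {l : ℤ} (h₀ : P l) (h₁ : P (l + 1))
    (step : ∀ j, l ≤ j → P j → P (j + 1) → P (j + 2)) : ∀ k, l ≤ k → P k := by
  suffices h : ∀ k, l ≤ k → P k ∧ P (k + 1) from fun k hk => (h k hk).1
  refine Int.leInduction ⟨h₀, h₁⟩ fun j hj ih => ⟨ih.2, ?_⟩
  rw [add_assoc, one_add_one_eq_two]
  exact step j hj ih.1 ih.2

namespace Polynomial

theorem X_pow_toNat_dvd_iff {R : Type*} [Semiring R] (p : R[X]) (a : ℤ) :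
    X ^ a.toNat ∣ p ↔ ∀ n : ℕ, p.coeff n ≠ 0 → a ≤ n := by
  rw [X_pow_dvd_iff]
  refine ⟨fun h n hn => ?_, fun h d hd => ?_⟩
  · by_contra hlt
    exact hn (h n (by omega))
  · by_contra hne
    have := h d hne
    omega

end Polynomial

theorem pow_dvd_add_mul {R : Type*} [CommSemiring R] {x f g p q : R} {a b c : ℕ}
    (hf : x ∣ f) (hg : x ∣ g) (hp : x ^ a ∣ p) (hq : x ^ b ∣ q) (ha : c ≤ a + 1)
    (hb : c ≤ b + 1) : x ^ c ∣ f * p + g * q := by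
  refine dvd_add ((pow_dvd_pow x ha).trans ?_) ((pow_dvd_pow x hb).trans ?_)
  · rw [pow_succ']
    exact mul_dvd_mul hf hp
  · rw [pow_succ']
    exact mul_dvd_mul hg hq

theorem ceil_half_add_two {K : Type*} [Field K] [LinearOrder K] [IsStrictOrderedRing K]
    [FloorRing K] (m : ℤ) : ⌈((m + 2 : ℤ) : K) / 2⌉ = ⌈(m : K) / 2⌉ + 1 := by
  rw [← Int.ceil_add_one]
  congr 1
  push_cast
  ring

theorem ceil_half_mono {K : Type*} [Field K] [LinearOrder K] [IsStrictOrderedRing K]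
    [FloorRing K] : Monotone fun m : ℤ => ⌈(m : K) / 2⌉ :=
  fun _ _ h => Int.ceil_mono (div_le_div_of_nonneg_right (by exact_mod_cast h) zero_le_two)

def OrdGeCeilHalf {R : Type*} [Semiring R] (p : R[X]) (k s : ℤ) : Prop :=
  ∀ n : ℕ, p.coeff n ≠ 0 → ⌈((k + s : ℤ) : ℚ) / 2⌉ ≤ (n : ℤ)

theorem OrdGeCeilHalf.add_two {R : Type*} [CommSemiring R] {f g p q : R[X]} {j s : ℤ}
    (hf : X ∣ f) (hg : X ∣ g) (hp : OrdGeCeilHalf p j s) (hq : OrdGeCeilHalf q (j + 1) s) :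
    OrdGeCeilHalf (f * p + g * q) (j + 2) s := by
  unfold OrdGeCeilHalf at *
  rw [← X_pow_toNat_dvd_iff] at hp hq ⊢
  have hshift : ⌈((j + 2 + s : ℤ) : ℚ) / 2⌉ = ⌈((j + s : ℤ) : ℚ) / 2⌉ + 1 := by
    rw [← ceil_half_add_two]
    ring_nf
  have hmono : ⌈((j + s : ℤ) : ℚ) / 2⌉ ≤ ⌈((j + 1 + s : ℤ) : ℚ) / 2⌉ :=
    ceil_half_mono (by omega)
  exact pow_dvd_add_mul hf hg hp hq (by omega) (by omega)

/-- `U₂(u tᵏ) = v₁ p₁(t) + v₂ p₂(t)` on the upper half-plane with `ord_t pᵢ ≥ ⌈(k + sᵢ)/2⌉`. -/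
def U2PolyRep (t u v₁ v₂ : ℂ → ℂ) (s₁ s₂ k : ℤ) : Prop :=
  ∃ p₁ p₂ : Polynomial ℤ,
    (∀ τ : ℂ, 0 < τ.im →
      U2 (fun σ => u σ * t σ ^ k) τ = v₁ τ * aeval (t τ) p₁ + v₂ τ * aeval (t τ) p₂) ∧
    OrdGeCeilHalf p₁ k s₁ ∧ OrdGeCeilHalf p₂ k s₂

theorem U2PolyRep.add_two {t u v₁ v₂ : ℂ → ℂ} {s₁ s₂ j : ℤ}
    (hrec : ∀ τ : ℂ, 0 < τ.im →
      U2 (fun σ => u σ * t σ ^ (j + 2)) τ =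
        -(2 * t τ ^ 2 + t τ) * U2 (fun σ => u σ * t σ ^ j) τ +
          (4 * t τ ^ 2 + 2 * t τ) * U2 (fun σ => u σ * t σ ^ (j + 1)) τ)
    (hj : U2PolyRep t u v₁ v₂ s₁ s₂ j) (hj₁ : U2PolyRep t u v₁ v₂ s₁ s₂ (j + 1)) :
    U2PolyRep t u v₁ v₂ s₁ s₂ (j + 2) := by
  obtain ⟨a₁, a₂, ha, ha₁, ha₂⟩ := hj
  obtain ⟨b₁, b₂, hb, hb₁, hb₂⟩ := hj₁
  set q : ℤ[X] := -(2 * X ^ 2 + X)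
  set r : ℤ[X] := 4 * X ^ 2 + 2 * X
  have hq : X ∣ q := ⟨-(2 * X + 1), by ring⟩
  have hr : X ∣ r := ⟨4 * X + 2, by ring⟩
  refine ⟨q * a₁ + r * b₁, q * a₂ + r * b₂, fun τ hτ => ?_, ha₁.add_two hq hr hb₁,
    ha₂.add_two hq hr hb₂⟩
  rw [hrec τ hτ, ha τ hτ, hb τ hτ]
  simp only [q, r, map_add, map_mul, map_neg, map_pow, map_ofNat, aeval_X]
  ring

/-- Lemma 4.1: let `v₁, v₂, u : ℍ → ℂ`, `l ∈ ℤ`, and let `t` satisfy the three-term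
recursion `U₂(u tʲ) = −(2t²+t)·U₂(u t^{j−2}) + (4t²+2t)·U₂(u t^{j−1})`.  If for
`k = l, l+1` there are `p_k⁽¹⁾, p_k⁽²⁾ ∈ ℤ[t]` with
`U₂(u tᵏ) = v₁ p_k⁽¹⁾(t) + v₂ p_k⁽²⁾(t)` and `ord_t(p_k⁽ⁱ⁾) ≥ ⌈(k+sᵢ)/2⌉` (every
nonzero coefficient sits in degree `≥ ⌈(k+sᵢ)/2⌉`), then such polynomials exist for
every integer `k ≥ l`. -/
theorem U2_polynomial_representation (t u v₁ v₂ : ℂ → ℂ) (s₁ s₂ l : ℤ)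
    (hrec : ∀ (w : ℂ → ℂ) (j : ℤ) (τ : ℂ), 0 < τ.im →
      U2 (fun σ => w σ * t σ ^ j) τ =
        -(2 * t τ ^ 2 + t τ) * U2 (fun σ => w σ * t σ ^ (j - 2)) τ +
          (4 * t τ ^ 2 + 2 * t τ) * U2 (fun σ => w σ * t σ ^ (j - 1)) τ)
    (hbase : ∀ k : ℤ, (k = l ∨ k = l + 1) →
      ∃ p₁ p₂ : Polynomial ℤ,
        (∀ τ : ℂ, 0 < τ.im →
          U2 (fun σ => u σ * t σ ^ k) τ =
            v₁ τ * aeval (t τ) p₁ + v₂ τ * aeval (t τ) p₂) ∧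
        (∀ n : ℕ, p₁.coeff n ≠ 0 → ⌈((k + s₁ : ℤ) : ℚ) / 2⌉ ≤ (n : ℤ)) ∧
        (∀ n : ℕ, p₂.coeff n ≠ 0 → ⌈((k + s₂ : ℤ) : ℚ) / 2⌉ ≤ (n : ℤ))) :
    ∀ k : ℤ, l ≤ k →
      ∃ p₁ p₂ : Polynomial ℤ,
        (∀ τ : ℂ, 0 < τ.im →
          U2 (fun σ => u σ * t σ ^ k) τ =
            v₁ τ * aeval (t τ) p₁ + v₂ τ * aeval (t τ) p₂) ∧
        (∀ n : ℕ, p₁.coeff n ≠ 0 → ⌈((k + s₁ : ℤ) : ℚ) / 2⌉ ≤ (n : ℤ)) ∧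
        (∀ n : ℕ, p₂.coeff n ≠ 0 → ⌈((k + s₂ : ℤ) : ℚ) / 2⌉ ≤ (n : ℤ)) := by
  refine Int.le_induction_two_step (P := U2PolyRep t u v₁ v₂ s₁ s₂)
    (hbase l (Or.inl rfl)) (hbase (l + 1) (Or.inr rfl)) fun j _ hj hj₁ => hj.add_two ?_ hj₁
  intro τ hτ
  have hrec_j := hrec u (j + 2) τ hτ
  rwa [add_sub_cancel_right, show j + 2 - 1 = j + 1 by ring] at hrec_j
end

section
/- Let v₁, v₂, u : ℍ → ℂ and l ∈ ℤ. Suppose for k = l and k = l+1 there exist polynomials p_k^{(i)}(t) = ∑_n c_i(k,n) 2^{⌊(2n−k+γ_i)/2⌋} t^n ∈ ℤ[t] (with integers γ_i, c_i(k,n)) such that U₂(u t^k) = v₁ p_k^{(1)}(t) + v₂ p_k^{(2)}(t). Then for every integer k ≥ l there exist polynomials of the same form satisfying this identity. -/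
open Complex Polynomial

/-- A polynomial `p ∈ ℤ[t]` has the form `∑_n c(n) 2^{⌊(2n−k+γ)/2⌋} tⁿ` with integer
coefficients `c(n)`: every coefficient is a multiple of `2^{⌊(2n−k+γ)/2⌋}` (the
exponent being nonnegative wherever the coefficient is nonzero). -/
def HasTwoAdicForm (p : Polynomial ℤ) (k γ : ℤ) : Prop :=
  ∀ n : ℕ, p.coeff n ≠ 0 →
    0 ≤ ⌊((2 * (n : ℤ) - k + γ : ℤ) : ℚ) / 2⌋ ∧
      ∃ c : ℤ, p.coeff n = c * 2 ^ (⌊((2 * (n : ℤ) - k + γ : ℤ) : ℚ) / 2⌋).toNat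

lemma floor_half_int (a : ℤ) : ⌊((a : ℚ)) / 2⌋ = a / 2 := by
  have h : ((2 : ℚ)) = ((2 : ℕ) : ℚ) := by norm_num
  rw [h, Rat.floor_intCast_div_natCast]
  norm_num

/-- Reformulation of `HasTwoAdicForm` with integer division. -/
lemma hasTwoAdicForm_iff (p : Polynomial ℤ) (k γ : ℤ) :
    HasTwoAdicForm p k γ ↔ ∀ n : ℕ, p.coeff n ≠ 0 →
      0 ≤ (2 * (n : ℤ) - k + γ) / 2 ∧
        ∃ c : ℤ, p.coeff n = c * 2 ^ ((2 * (n : ℤ) - k + γ) / 2).toNat := by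
  unfold HasTwoAdicForm
  simp only [floor_half_int]

lemma hasTwoAdicForm_step (p q : Polynomial ℤ) (k γ : ℤ)
    (hp : HasTwoAdicForm p (k - 2) γ) (hq : HasTwoAdicForm q (k - 1) γ) :
    HasTwoAdicForm (C (-2) * (p * X ^ 2) - p * X + C 4 * (q * X ^ 2) + C 2 * (q * X)) k γ := by
  rw [hasTwoAdicForm_iff] at hp hq ⊢
  intro n hn
  set E : ℤ := (2 * (n : ℤ) - k + γ) / 2 with hE
  have hcoeff : (C (-2) * (p * X ^ 2) - p * X + C 4 * (q * X ^ 2) + C 2 * (q * X)).coeff n =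
      -2 * (if 2 ≤ n then p.coeff (n - 2) else 0)
        - (if 1 ≤ n then p.coeff (n - 1) else 0)
        + 4 * (if 2 ≤ n then q.coeff (n - 2) else 0)
        + 2 * (if 1 ≤ n then q.coeff (n - 1) else 0) := by
    have e1 : ∀ r : Polynomial ℤ, (r * X).coeff n = if 1 ≤ n then r.coeff (n - 1) else 0 := by
      intro r
      rw [← pow_one (X : Polynomial ℤ), coeff_mul_X_pow']
    rw [coeff_add, coeff_add, coeff_sub, coeff_C_mul, coeff_C_mul, coeff_C_mul,
      coeff_mul_X_pow', coeff_mul_X_pow', e1, e1]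
  -- term A : -2 * p.coeff (n-2)
  have hA : (-2 * (if 2 ≤ n then p.coeff (n - 2) else 0)) = 0 ∨
      (0 ≤ E ∧ (2 : ℤ) ^ E.toNat ∣ -2 * (if 2 ≤ n then p.coeff (n - 2) else 0)) := by
    by_cases h2 : 2 ≤ n
    · simp only [if_pos h2]
      by_cases hz : p.coeff (n - 2) = 0
      · left; simp [hz]
      · right
        obtain ⟨he, c, hc⟩ := hp (n - 2) hz
        have hcast : (2 * ((n - 2 : ℕ) : ℤ) - (k - 2) + γ) / 2 = E - 1 := by
          have : ((n - 2 : ℕ) : ℤ) = (n : ℤ) - 2 := by omega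
          rw [this, hE]; omega
        rw [hcast] at he hc
        constructor
        · omega
        · rw [hc]
          have hE1 : E.toNat = (E - 1).toNat + 1 := by omega
          rw [hE1, pow_succ]
          exact ⟨-c, by ring⟩
    · left; simp [h2]
  -- term B : - p.coeff (n-1)
  have hB : (-(if 1 ≤ n then p.coeff (n - 1) else 0)) = 0 ∨
      (0 ≤ E ∧ (2 : ℤ) ^ E.toNat ∣ -(if 1 ≤ n then p.coeff (n - 1) else 0)) := by
    by_cases h1 : 1 ≤ n
    · simp only [if_pos h1]
      by_cases hz : p.coeff (n - 1) = 0
      · left; simp [hz]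
      · right
        obtain ⟨he, c, hc⟩ := hp (n - 1) hz
        have hcast : (2 * ((n - 1 : ℕ) : ℤ) - (k - 2) + γ) / 2 = E := by
          have : ((n - 1 : ℕ) : ℤ) = (n : ℤ) - 1 := by omega
          rw [this, hE]; omega
        rw [hcast] at he hc
        exact ⟨he, ⟨-c, by rw [hc]; ring⟩⟩
    · left; simp [h1]
  -- term C : 4 * q.coeff (n-2)
  have hC : (4 * (if 2 ≤ n then q.coeff (n - 2) else 0)) = 0 ∨
      (0 ≤ E ∧ (2 : ℤ) ^ E.toNat ∣ 4 * (if 2 ≤ n then q.coeff (n - 2) else 0)) := by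
    by_cases h2 : 2 ≤ n
    · simp only [if_pos h2]
      by_cases hz : q.coeff (n - 2) = 0
      · left; simp [hz]
      · right
        obtain ⟨he, c, hc⟩ := hq (n - 2) hz
        set F : ℤ := (2 * ((n - 2 : ℕ) : ℤ) - (k - 1) + γ) / 2 with hF
        have hn2 : ((n - 2 : ℕ) : ℤ) = (n : ℤ) - 2 := by omega
        have hFE : E - 2 ≤ F ∧ F ≤ E - 1 := by rw [hF, hn2, hE]; omega
        constructor
        · omega
        · have hle : E.toNat ≤ F.toNat + 2 := by omega
          have : (2 : ℤ) ^ E.toNat ∣ 4 * 2 ^ F.toNat := by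
            have : (4 : ℤ) * 2 ^ F.toNat = 2 ^ (F.toNat + 2) := by ring
            rw [this]
            exact pow_dvd_pow 2 hle
          rw [hc, show (4 : ℤ) * (c * 2 ^ F.toNat) = c * (4 * 2 ^ F.toNat) by ring]
          exact Dvd.dvd.mul_left this c
    · left; simp [h2]
  -- term D : 2 * q.coeff (n-1)
  have hD : (2 * (if 1 ≤ n then q.coeff (n - 1) else 0)) = 0 ∨
      (0 ≤ E ∧ (2 : ℤ) ^ E.toNat ∣ 2 * (if 1 ≤ n then q.coeff (n - 1) else 0)) := by
    by_cases h1 : 1 ≤ n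
    · simp only [if_pos h1]
      by_cases hz : q.coeff (n - 1) = 0
      · left; simp [hz]
      · right
        obtain ⟨he, c, hc⟩ := hq (n - 1) hz
        set F : ℤ := (2 * ((n - 1 : ℕ) : ℤ) - (k - 1) + γ) / 2 with hF
        have hn1 : ((n - 1 : ℕ) : ℤ) = (n : ℤ) - 1 := by omega
        have hFE : E - 1 ≤ F ∧ F ≤ E := by rw [hF, hn1, hE]; omega
        constructor
        · omega
        · have hle : E.toNat ≤ F.toNat + 1 := by omega
          have h2 : (2 : ℤ) ^ E.toNat ∣ 2 * 2 ^ F.toNat := by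
            have : (2 : ℤ) * 2 ^ F.toNat = 2 ^ (F.toNat + 1) := by ring
            rw [this]
            exact pow_dvd_pow 2 hle
          rw [hc, show (2 : ℤ) * (c * 2 ^ F.toNat) = c * (2 * 2 ^ F.toNat) by ring]
          exact Dvd.dvd.mul_left h2 c
    · left; simp [h1]
  -- combine
  have hne : ¬ ((-2 * (if 2 ≤ n then p.coeff (n - 2) else 0)) = 0 ∧
      (-(if 1 ≤ n then p.coeff (n - 1) else 0)) = 0 ∧
      (4 * (if 2 ≤ n then q.coeff (n - 2) else 0)) = 0 ∧
      (2 * (if 1 ≤ n then q.coeff (n - 1) else 0)) = 0) := by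
    rintro ⟨ha, hb, hc, hd⟩
    apply hn
    rw [hcoeff, sub_eq_add_neg, ha, hb, hc, hd]
    ring
  have hEnn : 0 ≤ E := by
    rcases hA with h | ⟨h, _⟩
    · rcases hB with h' | ⟨h', _⟩
      · rcases hC with h'' | ⟨h'', _⟩
        · rcases hD with h''' | ⟨h''', _⟩
          · exact absurd ⟨h, h', h'', h'''⟩ hne
          · exact h'''
        · exact h''
      · exact h'
    · exact h
  have hdvd : (2 : ℤ) ^ E.toNat ∣
      (C (-2) * (p * X ^ 2) - p * X + C 4 * (q * X ^ 2) + C 2 * (q * X)).coeff n := by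
    rw [hcoeff]
    have dA : (2 : ℤ) ^ E.toNat ∣ -2 * (if 2 ≤ n then p.coeff (n - 2) else 0) := by
      rcases hA with h | ⟨_, h⟩
      · rw [h]; exact dvd_zero _
      · exact h
    have dB : (2 : ℤ) ^ E.toNat ∣ -(if 1 ≤ n then p.coeff (n - 1) else 0) := by
      rcases hB with h | ⟨_, h⟩
      · rw [h]; exact dvd_zero _
      · exact h
    have dC : (2 : ℤ) ^ E.toNat ∣ 4 * (if 2 ≤ n then q.coeff (n - 2) else 0) := by
      rcases hC with h | ⟨_, h⟩
      · rw [h]; exact dvd_zero _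
      · exact h
    have dD : (2 : ℤ) ^ E.toNat ∣ 2 * (if 1 ≤ n then q.coeff (n - 1) else 0) := by
      rcases hD with h | ⟨_, h⟩
      · rw [h]; exact dvd_zero _
      · exact h
    rw [sub_eq_add_neg]
    exact dvd_add (dvd_add (dvd_add dA dB) dC) dD
  refine ⟨hEnn, ?_⟩
  obtain ⟨c, hc⟩ := hdvd
  exact ⟨c, by rw [hc, mul_comm]⟩

/-- Lemma 4.2: let `v₁, v₂, u : ℍ → ℂ`, `l ∈ ℤ`, and let `t` satisfy the three-term
recursion `U₂(u tʲ) = −(2t²+t)·U₂(u t^{j−2}) + (4t²+2t)·U₂(u t^{j−1})`.  If for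
`k = l, l+1` there are `p_k⁽ⁱ⁾(t) = ∑_n cᵢ(k,n) 2^{⌊(2n−k+γᵢ)/2⌋} tⁿ ∈ ℤ[t]` with
`U₂(u tᵏ) = v₁ p_k⁽¹⁾(t) + v₂ p_k⁽²⁾(t)`, then polynomials of the same form exist for
every integer `k ≥ l`. -/
theorem U2_two_adic_representation (t u v₁ v₂ : ℂ → ℂ) (γ₁ γ₂ l : ℤ)
    (hrec : ∀ (w : ℂ → ℂ) (j : ℤ) (τ : ℂ), 0 < τ.im →
      U2 (fun σ => w σ * t σ ^ j) τ =
        -(2 * t τ ^ 2 + t τ) * U2 (fun σ => w σ * t σ ^ (j - 2)) τ +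
          (4 * t τ ^ 2 + 2 * t τ) * U2 (fun σ => w σ * t σ ^ (j - 1)) τ)
    (hbase : ∀ k : ℤ, (k = l ∨ k = l + 1) →
      ∃ p₁ p₂ : Polynomial ℤ,
        (∀ τ : ℂ, 0 < τ.im →
          U2 (fun σ => u σ * t σ ^ k) τ =
            v₁ τ * aeval (t τ) p₁ + v₂ τ * aeval (t τ) p₂) ∧
        HasTwoAdicForm p₁ k γ₁ ∧ HasTwoAdicForm p₂ k γ₂) :
    ∀ k : ℤ, l ≤ k →
      ∃ p₁ p₂ : Polynomial ℤ,
        (∀ τ : ℂ, 0 < τ.im →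
          U2 (fun σ => u σ * t σ ^ k) τ =
            v₁ τ * aeval (t τ) p₁ + v₂ τ * aeval (t τ) p₂) ∧
        HasTwoAdicForm p₁ k γ₁ ∧ HasTwoAdicForm p₂ k γ₂ := by
  have main : ∀ m : ℕ, ∃ p₁ p₂ : Polynomial ℤ,
      (∀ τ : ℂ, 0 < τ.im →
        U2 (fun σ => u σ * t σ ^ (l + m)) τ =
          v₁ τ * aeval (t τ) p₁ + v₂ τ * aeval (t τ) p₂) ∧
      HasTwoAdicForm p₁ (l + m) γ₁ ∧ HasTwoAdicForm p₂ (l + m) γ₂ := by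
    intro m
    induction m using Nat.strong_induction_on with
    | _ m ih =>
      match m with
      | 0 => simpa using hbase l (Or.inl rfl)
      | 1 => simpa using hbase (l + 1) (Or.inr rfl)
      | (m + 2) =>
        obtain ⟨p₁, p₂, hp, hp1, hp2⟩ := ih m (by omega)
        obtain ⟨q₁, q₂, hq, hq1, hq2⟩ := ih (m + 1) (by omega)
        set k : ℤ := l + (m + 2 : ℕ) with hk
        have hk2 : k - 2 = l + (m : ℕ) := by push_cast [hk]; ring
        have hk1 : k - 1 = l + ((m + 1 : ℕ) : ℤ) := by push_cast [hk]; ring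
        refine ⟨C (-2) * (p₁ * X ^ 2) - p₁ * X + C 4 * (q₁ * X ^ 2) + C 2 * (q₁ * X),
                C (-2) * (p₂ * X ^ 2) - p₂ * X + C 4 * (q₂ * X ^ 2) + C 2 * (q₂ * X), ?_, ?_, ?_⟩
        · intro τ hτ
          have h := hrec u k τ hτ
          rw [hk2, hp τ hτ] at h
          rw [hk1, hq τ hτ] at h
          rw [h]
          simp only [map_add, map_sub, map_mul, map_pow, aeval_X, aeval_C, map_ofNat, map_neg, algebraMap_int_eq,
            eq_intCast, Int.cast_neg, Int.cast_ofNat]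
          ring
        · exact hasTwoAdicForm_step p₁ q₁ k γ₁ (hk2 ▸ hp1) (hk1 ▸ hq1)
        · exact hasTwoAdicForm_step p₂ q₂ k γ₂ (hk2 ▸ hp2) (hk1 ▸ hq2)
  intro k hk
  have : k = l + ((k - l).toNat : ℤ) := by omega
  rw [this]
  exact main (k - l).toNat
end

section
/- As formal power series in q with integer coefficients: ∏_{n≥1} (1-q^{14n})^7 (1-q^{4n})^5 (1-q^n)^6 / ((1-q^{28n})^3 (1-q^{7n})^2 (1-q^{2n})^{13}) ≡ 7·∏_{n≥1} (1-q^{14n})^6 (1-q^{4n})^5 / ((1-q^{28n})^3 (1-q^{2n})^{10}) (mod 2), and consequently 1 + 7·∏_{n≥1} (1-q^{14n})^7 (1-q^{4n})^5 (1-q^n)^6 / ((1-q^{28n})^3 (1-q^{7n})^2 (1-q^{2n})^{13}) ≡ 0 (mod 2) coefficientwise. -/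
/-! Modulo 2 one has `1 - q^{2m} ≡ (1 - q^m)²`, so every factor `1 - q^{mn}` occurring here is a
power of `1 - q^n` or of `1 - q^{7n}`. Counting exponents, `η₁₄⁷η₄⁵η₁⁶ ≡ η₂₈³η₇²η₂¹³` and
`η₁₄⁶η₄⁵ ≡ η₂₈³η₂¹⁰`, so the two congruences reduce to `1 ≡ 7` and `1 + 7 ≡ 0`. -/

open PowerSeries Finset

instance PowerSeries.charP (R : Type*) [CommSemiring R] (p : ℕ) [CharP R p] : CharP R⟦X⟧ p :=
  charP_of_injective_algebraMap C_injective p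

theorem PowerSeries.coeff_modEq_of_map_intCast_eq {n : ℕ} {f g : ℤ⟦X⟧}
    (h : map (Int.castRingHom (ZMod n)) f = map (Int.castRingHom (ZMod n)) g) (d : ℕ) :
    coeff d f ≡ coeff d g [ZMOD n] := by
  rw [← ZMod.intCast_eq_intCast_iff]
  simpa using congrArg (coeff d) h

namespace CharTwo

variable {S : Type*} [CommRing S] [CharP S 2]

theorem one_sub_sq (b : S) : (1 - b) ^ 2 = 1 - b ^ 2 := by
  rw [sub_pow_char, one_pow]

theorem ofNat_seven : (7 : S) = 1 := by
  rw [ofNat_eq_mod]; norm_num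

-- Both sides are `(1 - a ^ (7 * k)) ^ 14 * (1 - a ^ k) ^ 26`.
theorem eta_factor_28_7_2_eq_14_4_1 (a : S) (k : ℕ) :
    (1 - a ^ (28 * k)) ^ 3 * (1 - a ^ (7 * k)) ^ 2 * (1 - a ^ (2 * k)) ^ 13 =
      (1 - a ^ (14 * k)) ^ 7 * (1 - a ^ (4 * k)) ^ 5 * (1 - a ^ k) ^ 6 := by
  rw [show a ^ (28 * k) = ((a ^ (7 * k)) ^ 2) ^ 2 by ring,
    show a ^ (14 * k) = (a ^ (7 * k)) ^ 2 by ring, show a ^ (4 * k) = ((a ^ k) ^ 2) ^ 2 by ring,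
    show a ^ (2 * k) = (a ^ k) ^ 2 by ring]
  simp only [← one_sub_sq]
  ring

-- Both sides are `(1 - a ^ (7 * k)) ^ 12 * (1 - a ^ k) ^ 20`.
theorem eta_factor_28_2_eq_14_4 (a : S) (k : ℕ) :
    (1 - a ^ (28 * k)) ^ 3 * (1 - a ^ (2 * k)) ^ 10 =
      (1 - a ^ (14 * k)) ^ 6 * (1 - a ^ (4 * k)) ^ 5 := by
  rw [show a ^ (28 * k) = ((a ^ (7 * k)) ^ 2) ^ 2 by ring,
    show a ^ (14 * k) = (a ^ (7 * k)) ^ 2 by ring, show a ^ (4 * k) = ((a ^ k) ^ 2) ^ 2 by ring,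
    show a ^ (2 * k) = (a ^ k) ^ 2 by ring]
  simp only [← one_sub_sq]
  ring

end CharTwo

/-- The congruences are cross-multiplied by the denominators, which are units mod 2, and the
products are truncated at `n ≤ d`, which does not change the coefficient of `q^d`. -/
theorem p_has_integer_coefficients (d : ℕ) :
    ((PowerSeries.coeff (R := ℤ) d)
        ((∏ n ∈ range (d + 1),
            ((1 - (X : ℤ⟦X⟧) ^ (14 * (n + 1))) ^ 7 * (1 - X ^ (4 * (n + 1))) ^ 5 *
              (1 - X ^ (n + 1)) ^ 6)) *
         (∏ n ∈ range (d + 1),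
            ((1 - (X : ℤ⟦X⟧) ^ (28 * (n + 1))) ^ 3 * (1 - X ^ (2 * (n + 1))) ^ 10))) ≡
      (PowerSeries.coeff (R := ℤ) d)
        (7 * (∏ n ∈ range (d + 1),
            ((1 - (X : ℤ⟦X⟧) ^ (14 * (n + 1))) ^ 6 * (1 - X ^ (4 * (n + 1))) ^ 5)) *
         (∏ n ∈ range (d + 1),
            ((1 - (X : ℤ⟦X⟧) ^ (28 * (n + 1))) ^ 3 * (1 - X ^ (7 * (n + 1))) ^ 2 *
              (1 - X ^ (2 * (n + 1))) ^ 13))) [ZMOD 2]) ∧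
    ((PowerSeries.coeff (R := ℤ) d)
        ((∏ n ∈ range (d + 1),
            ((1 - (X : ℤ⟦X⟧) ^ (28 * (n + 1))) ^ 3 * (1 - X ^ (7 * (n + 1))) ^ 2 *
              (1 - X ^ (2 * (n + 1))) ^ 13)) +
         7 * (∏ n ∈ range (d + 1),
            ((1 - (X : ℤ⟦X⟧) ^ (14 * (n + 1))) ^ 7 * (1 - X ^ (4 * (n + 1))) ^ 5 *
              (1 - X ^ (n + 1)) ^ 6))) ≡ 0 [ZMOD 2]) := by
  constructor
  · apply coeff_modEq_of_map_intCast_eq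
    simp only [map_mul, map_prod, map_pow, map_sub, map_one, map_X, map_ofNat,
      CharTwo.ofNat_seven, one_mul, CharTwo.eta_factor_28_7_2_eq_14_4_1,
      CharTwo.eta_factor_28_2_eq_14_4]
    exact mul_comm _ _
  · rw [← map_zero (coeff (R := ℤ) d)]
    apply coeff_modEq_of_map_intCast_eq
    simp only [map_add, map_mul, map_prod, map_pow, map_sub, map_one, map_X, map_ofNat, map_zero,
      CharTwo.ofNat_seven, one_mul, CharTwo.eta_factor_28_7_2_eq_14_4_1]
    exact CharTwo.add_self_eq_zero _
end
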